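/- If a complete Riemannian manifold M has positive fundamental tone λ*(M) > 0 then M is non-parabolic (hyperbolic); contrapositively, every parabolic manifold has λ*(M) = 0. In particular, a complete surface with finite total curvature (which is parabolic) has zero fundamental tone. -/

import Mathlib

/-!
The Rayleigh quotients `E(uₙ) / ∫ uₙ²` of a capacity sequence `uₙ → 1` tend to `0`: the
energies vanish, while the masses `∫ uₙ²` stay bounded away from `0`. For the latter, test
`uₙ²` against the integrable weight `min (u₀², 1)` built from any test function `u₀` with
`∫ u₀² > 0`: by dominated convergence `∫ uₙ² ≥ ∫ uₙ² min (u₀², 1) → ∫ min (u₀², 1) > 0`.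
-/

open Real Set Filter MeasureTheory

/-- An abstract Dirichlet setting: a measure space together with a class of
test functions and a (nonnegative) Dirichlet energy functional, modelling
`u ↦ ∫_M |∇u|² dμ` on smooth compactly supported functions of a complete
Riemannian manifold. -/
structure DirichletSetting (X : Type*) [MeasurableSpace X] where
  μ : Measure X
  test : Set (X → ℝ)
  energy : (X → ℝ) → ℝ
  energy_nonneg : ∀ u ∈ test, 0 ≤ energy u
  test_sq_integrable : ∀ u ∈ test, Integrable (fun x => u x ^ 2) μ
  test_nontrivial : ∃ u ∈ test, 0 < ∫ x, u x ^ 2 ∂μ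

/-- The fundamental tone `λ*(M) = inf ∫|∇u|²/∫u²` over nonzero test
functions. -/
noncomputable def fundamentalTone {X : Type*} [MeasurableSpace X]
    (D : DirichletSetting X) : ℝ :=
  sInf {r : ℝ | ∃ u ∈ D.test, 0 < ∫ x, u x ^ 2 ∂D.μ ∧
    r = D.energy u / ∫ x, u x ^ 2 ∂D.μ}

/-- Parabolicity, via the capacity characterization: there is a sequence of
test functions `0 ≤ uₙ ≤ 1` converging pointwise to `1` whose energies tend
to `0`. -/
def Parabolic {X : Type*} [MeasurableSpace X] (D : DirichletSetting X) : Prop :=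
  ∃ u : ℕ → X → ℝ, (∀ n, u n ∈ D.test) ∧
    (∀ n x, 0 ≤ u n x ∧ u n x ≤ 1) ∧
    (∀ x, Tendsto (fun n => u n x) atTop (nhds 1)) ∧
    Tendsto (fun n => D.energy (u n)) atTop (nhds 0)

open Topology

section Truncation

variable {X : Type*} [MeasurableSpace X] {μ : Measure X} {f : X → ℝ}

theorem MeasureTheory.Integrable.min_one (hf : Integrable f μ) (hf₀ : 0 ≤ f) :
    Integrable (fun x => min (f x) 1) μ :=
  hf.mono' (hf.aestronglyMeasurable.inf aestronglyMeasurable_const) <|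
    .of_forall fun x => by
      rw [Real.norm_eq_abs, abs_of_nonneg (le_min (hf₀ x) zero_le_one)]
      exact min_le_left _ _

theorem integral_min_one_pos (hf : Integrable f μ) (hf₀ : 0 ≤ f) (hpos : 0 < ∫ x, f x ∂μ) :
    0 < ∫ x, min (f x) 1 ∂μ := by
  have hsupp : Function.support (fun x => min (f x) 1) = Function.support f := by
    ext x
    simp only [Function.mem_support]
    have := hf₀ x
    constructor <;> intro h₁ h₂ <;> simp_all [min_eq_iff]
  rw [integral_pos_iff_support_of_nonneg (fun x => le_min (hf₀ x) zero_le_one)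
    (hf.min_one hf₀), hsupp]
  exact (integral_pos_iff_support_of_nonneg hf₀ hf).mp hpos

end Truncation

section MassBound

variable {X : Type*} [MeasurableSpace X] {μ : Measure X}

theorem tendsto_integral_mul_of_tendsto_one {F : ℕ → X → ℝ} {g : X → ℝ}
    (hF : ∀ n, AEStronglyMeasurable (F n) μ) (hg : Integrable g μ)
    (hF_le : ∀ n x, |F n x| ≤ 1) (hlim : ∀ x, Tendsto (F · x) atTop (𝓝 1)) :
    Tendsto (fun n => ∫ x, F n x * g x ∂μ) atTop (𝓝 (∫ x, g x ∂μ)) := by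
  refine tendsto_integral_of_dominated_convergence (fun x => ‖g x‖)
    (fun n => (hF n).mul hg.aestronglyMeasurable) hg.norm
    (fun n => .of_forall fun x => ?_) (.of_forall fun x => ?_)
  · rw [norm_mul, Real.norm_eq_abs]
    exact mul_le_of_le_one_left (norm_nonneg _) (hF_le n x)
  · simpa using (hlim x).mul_const (g x)

theorem exists_pos_eventually_le_integral {F : ℕ → X → ℝ} {h : X → ℝ}
    (hF : ∀ n, Integrable (F n) μ) (hF_bd : ∀ n x, 0 ≤ F n x ∧ F n x ≤ 1)
    (hlim : ∀ x, Tendsto (F · x) atTop (𝓝 1))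
    (hh : Integrable h μ) (hh₀ : 0 ≤ h) (hpos : 0 < ∫ x, h x ∂μ) :
    ∃ c > 0, ∀ᶠ n in atTop, c ≤ ∫ x, F n x ∂μ := by
  set g : X → ℝ := fun x => min (h x) 1
  have hg : Integrable g μ := hh.min_one hh₀
  have hc : 0 < ∫ x, g x ∂μ := integral_min_one_pos hh hh₀ hpos
  have hF_abs : ∀ n x, |F n x| ≤ 1 := fun n x =>
    abs_le.mpr ⟨by linarith [(hF_bd n x).1], (hF_bd n x).2⟩
  have hweighted := tendsto_integral_mul_of_tendsto_one
    (fun n => (hF n).aestronglyMeasurable) hg hF_abs hlim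
  refine ⟨(∫ x, g x ∂μ) / 2, half_pos hc, ?_⟩
  filter_upwards [hweighted.eventually (eventually_gt_nhds (half_lt_self hc))] with n hn
  have hFg : Integrable (fun x => F n x * g x) μ :=
    hg.bdd_mul (hF n).aestronglyMeasurable (.of_forall (hF_abs n))
  refine hn.le.trans (integral_mono hFg (hF n) fun x => ?_)
  exact mul_le_of_le_one_right (hF_bd n x).1 (min_le_right _ _)

end MassBound

theorem tendsto_div_of_tendsto_zero_of_eventually_le {ι : Type*} {l : Filter ι} {a b : ι → ℝ}
    {c : ℝ} (hc : 0 < c) (ha : Tendsto a l (𝓝 0)) (ha₀ : ∀ i, 0 ≤ a i)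
    (hb : ∀ᶠ i in l, c ≤ b i) : Tendsto (fun i => a i / b i) l (𝓝 0) := by
  refine tendsto_of_tendsto_of_tendsto_of_le_of_le' tendsto_const_nhds
    (by simpa using ha.div_const c) ?_ ?_
  · filter_upwards [hb] with i hi
    exact div_nonneg (ha₀ i) (hc.le.trans hi)
  · filter_upwards [hb] with i hi
    exact div_le_div_of_nonneg_left (ha₀ i) hc hi

namespace DirichletSetting

variable {X : Type*} [MeasurableSpace X] (D : DirichletSetting X)

theorem fundamentalTone_nonneg : 0 ≤ fundamentalTone D := by
  obtain ⟨u₀, hu₀, hI₀⟩ := D.test_nontrivial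
  refine le_csInf ⟨_, u₀, hu₀, hI₀, rfl⟩ ?_
  rintro r ⟨u, hu, hI, rfl⟩
  exact div_nonneg (D.energy_nonneg u hu) hI.le

theorem fundamentalTone_le {u : X → ℝ} (hu : u ∈ D.test) (hI : 0 < ∫ x, u x ^ 2 ∂D.μ) :
    fundamentalTone D ≤ D.energy u / ∫ x, u x ^ 2 ∂D.μ := by
  refine csInf_le ⟨0, ?_⟩ ⟨u, hu, hI, rfl⟩
  rintro r ⟨v, hv, hvI, rfl⟩
  exact div_nonneg (D.energy_nonneg v hv) hvI.le

end DirichletSetting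

/-- A parabolic manifold has zero fundamental tone; equivalently, positive
fundamental tone implies non-parabolicity.  In particular, a complete surface
with finite total curvature, being parabolic, has `λ*(M) = 0`. -/
theorem stmt_17 {X : Type*} [MeasurableSpace X] (D : DirichletSetting X)
    (hpar : Parabolic D) : fundamentalTone D = 0 := by
  obtain ⟨u, hu_test, hu_bd, hu_lim, hE⟩ := hpar
  obtain ⟨u₀, hu₀, hI₀⟩ := D.test_nontrivial
  have hsq_bd : ∀ n x, 0 ≤ u n x ^ 2 ∧ u n x ^ 2 ≤ 1 := fun n x =>
    ⟨sq_nonneg _, pow_le_one₀ (hu_bd n x).1 (hu_bd n x).2⟩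
  have hsq_lim : ∀ x, Tendsto (fun n => u n x ^ 2) atTop (𝓝 1) := fun x => by
    simpa using (hu_lim x).pow 2
  obtain ⟨c, hc, hmass⟩ := exists_pos_eventually_le_integral
    (fun n => D.test_sq_integrable _ (hu_test n)) hsq_bd hsq_lim
    (D.test_sq_integrable _ hu₀) (fun x => sq_nonneg _) hI₀
  have hquot := tendsto_div_of_tendsto_zero_of_eventually_le hc hE
    (fun n => D.energy_nonneg _ (hu_test n)) hmass
  refine le_antisymm (ge_of_tendsto hquot ?_) D.fundamentalTone_nonneg
  filter_upwards [hmass] with n hn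
  exact D.fundamentalTone_le (hu_test n) (hc.trans_le hn)
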